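/- arXiv:0905.4668 — 2 statements merged into one kernel-verified Lean document; each statement's English description precedes it below -/
import Mathlib

section
/- Let u ∈ H^1(ℝ) with E_0 = ∫_ℝ u^2 dx and E_1 = ∫_ℝ (√(1+u_x^2)-1) dx finite. Then ‖u‖_{L^∞}^4 ≤ 2 E_0 E_1 + E_1^2 ‖u‖_{L^∞}^2, and consequently ‖u‖_{L^∞} ≤ F_1 where F_1 = (1/√2)(E_1^2 + (8 E_0 E_1 + E_1^4)^{1/2})^{1/2}. -/
open MeasureTheory Filter Topology Set

/-!
Writing `w = √(1 + u_x²) - 1`, one has `u_x² = w (w + 2)`. Since `u² → 0` at both ends,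
`2 u(x)² ≤ ∫ |(u²)'|`, so `u(x)² ≤ ∫ |u u_x| = ∫ |u| √(w + 2) · √w`, and Cauchy–Schwarz bounds
the square of the right-hand side by `(∫ u² (w + 2)) E₁ ≤ (2 E₀ + M² E₁) E₁`. Taking the supremum
over `x` gives a quadratic inequality for `M²`, which is solved for `M`.
-/

theorem two_mul_abs_le_integral_abs_of_hasDerivAt_of_tendsto {f f' : ℝ → ℝ}
    (hf : ∀ x, HasDerivAt f (f' x) x) (hf' : Integrable f')
    (hbot : Tendsto f atBot (𝓝 0)) (htop : Tendsto f atTop (𝓝 0)) (x : ℝ) :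
    2 * |f x| ≤ ∫ y, |f' y| := by
  have hleft : ∫ y in Iic x, f' y = f x := by
    simpa using integral_Iic_of_hasDerivAt_of_tendsto' (fun y _ => hf y) hf'.integrableOn hbot
  have hright : ∫ y in Ioi x, f' y = -f x := by
    simpa using integral_Ioi_of_hasDerivAt_of_tendsto' (fun y _ => hf y) hf'.integrableOn htop
  calc 2 * |f x| = |∫ y in Iic x, f' y| + |∫ y in Ioi x, f' y| := by
        rw [hleft, hright, abs_neg]; ring
    _ ≤ (∫ y in Iic x, |f' y|) + ∫ y in Ioi x, |f' y| :=
        add_le_add abs_integral_le_integral_abs abs_integral_le_integral_abs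
    _ = ∫ y, |f' y| := intervalIntegral.integral_Iic_add_Ioi hf'.abs.integrableOn
        hf'.abs.integrableOn

theorem sq_le_integral_abs_mul_deriv {u : ℝ → ℝ} (hu : Differentiable ℝ u)
    (huu' : Integrable fun x => u x * deriv u x)
    (hbot : Tendsto u atBot (𝓝 0)) (htop : Tendsto u atTop (𝓝 0)) (x : ℝ) :
    u x ^ 2 ≤ ∫ y, |u y * deriv u y| := by
  have hderiv (y : ℝ) : HasDerivAt (fun z => u z ^ 2) (2 * (u y * deriv u y)) y := by
    simpa [mul_assoc] using (hu y).hasDerivAt.fun_pow 2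
  have := two_mul_abs_le_integral_abs_of_hasDerivAt_of_tendsto hderiv (huu'.const_mul 2)
    (by simpa using hbot.pow 2) (by simpa using htop.pow 2) x
  simp only [abs_pow, sq_abs, abs_mul (2 : ℝ), abs_two, integral_const_mul] at this
  linarith

theorem sq_integral_mul_le_integral_sq_mul_integral_sq {α : Type*} [MeasurableSpace α]
    {μ : Measure α} {f g : α → ℝ} (hf : MemLp f 2 μ) (hg : MemLp g 2 μ) :
    (∫ a, f a * g a ∂μ) ^ 2 ≤ (∫ a, f a ^ 2 ∂μ) * ∫ a, g a ^ 2 ∂μ := by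
  have inner_toLp (φ ψ : α → ℝ) (hφ : MemLp φ 2 μ) (hψ : MemLp ψ 2 μ) :
      inner ℝ hφ.toLp hψ.toLp = ∫ a, φ a * ψ a ∂μ := by
    rw [L2.inner_def]
    refine integral_congr_ae ?_
    filter_upwards [hφ.coeFn_toLp, hψ.coeFn_toLp] with a hφa hψa
    simp [hφa, hψa, mul_comm]
  have := real_inner_mul_inner_self_le hf.toLp hg.toLp
  rw [inner_toLp f g hf hg, inner_toLp f f hf hf, inner_toLp g g hg hg] at this
  simpa [sq] using this

/-- The integrand of `E₁`. -/
noncomputable def arcLengthExcess (v : ℝ) : ℝ := √(1 + v ^ 2) - 1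

theorem arcLengthExcess_nonneg (v : ℝ) : 0 ≤ arcLengthExcess v := by
  rw [arcLengthExcess, sub_nonneg]
  exact Real.one_le_sqrt.2 (le_add_of_nonneg_right (sq_nonneg v))

theorem sq_eq_arcLengthExcess_mul (v : ℝ) :
    v ^ 2 = arcLengthExcess v * (arcLengthExcess v + 2) := by
  have := Real.sq_sqrt (show 0 ≤ 1 + v ^ 2 by positivity)
  rw [arcLengthExcess]
  linear_combination -this

theorem abs_eq_sqrt_arcLengthExcess_mul (v : ℝ) :
    |v| = √(arcLengthExcess v) * √(arcLengthExcess v + 2) := by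
  rw [← Real.sqrt_mul (arcLengthExcess_nonneg v), ← sq_eq_arcLengthExcess_mul, Real.sqrt_sq_eq_abs]

theorem sq_mul_arcLengthExcess_add_two_le {a M : ℝ} (ha : |a| ≤ M) (v : ℝ) :
    a ^ 2 * (arcLengthExcess v + 2) ≤ M ^ 2 * arcLengthExcess v + 2 * a ^ 2 := by
  have : a ^ 2 ≤ M ^ 2 := sq_le_sq' (abs_le.1 ha).1 (abs_le.1 ha).2
  nlinarith [arcLengthExcess_nonneg v]

section Energy

variable {α : Type*} [MeasurableSpace α] {μ : Measure α} {u v : α → ℝ} {M : ℝ}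

theorem integrable_sq_mul_arcLengthExcess_add_two (hu : AEStronglyMeasurable u μ)
    (hM : ∀ x, |u x| ≤ M) (hu2 : Integrable (fun x => u x ^ 2) μ)
    (hw : Integrable (fun x => arcLengthExcess (v x)) μ) :
    Integrable (fun x => u x ^ 2 * (arcLengthExcess (v x) + 2)) μ := by
  refine ((hw.const_mul (M ^ 2)).add (hu2.const_mul 2)).mono'
    ((hu.pow 2).mul (hw.aestronglyMeasurable.add_const 2)) (ae_of_all _ fun x => ?_)
  rw [Real.norm_of_nonneg (by positivity [arcLengthExcess_nonneg (v x)])]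
  exact sq_mul_arcLengthExcess_add_two_le (hM x) (v x)

theorem sq_integral_abs_mul_le (hu : AEStronglyMeasurable u μ) (hv : AEStronglyMeasurable v μ)
    (hM : ∀ x, |u x| ≤ M) (hu2 : Integrable (fun x => u x ^ 2) μ)
    (hw : Integrable (fun x => arcLengthExcess (v x)) μ) :
    Integrable (fun x => u x * v x) μ ∧
      (∫ x, |u x * v x| ∂μ) ^ 2 ≤
        (2 * ∫ x, u x ^ 2 ∂μ + M ^ 2 * ∫ x, arcLengthExcess (v x) ∂μ) *
          ∫ x, arcLengthExcess (v x) ∂μ := by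
  set f := fun x => |u x| * √(arcLengthExcess (v x) + 2)
  set g := fun x => √(arcLengthExcess (v x))
  have hf_sq : (fun x => f x ^ 2) = fun x => u x ^ 2 * (arcLengthExcess (v x) + 2) := by
    ext x
    rw [mul_pow, sq_abs, Real.sq_sqrt (by linarith [arcLengthExcess_nonneg (v x)])]
  have hg_sq : (fun x => g x ^ 2) = fun x => arcLengthExcess (v x) :=
    funext fun x => Real.sq_sqrt (arcLengthExcess_nonneg (v x))
  have hf_meas : AEStronglyMeasurable f μ :=
    hu.norm.mul (Real.continuous_sqrt.comp_aestronglyMeasurable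
      (hw.aestronglyMeasurable.add_const 2))
  have hg_meas : AEStronglyMeasurable g μ :=
    Real.continuous_sqrt.comp_aestronglyMeasurable hw.aestronglyMeasurable
  have hf : MemLp f 2 μ := (memLp_two_iff_integrable_sq hf_meas).2
    (hf_sq ▸ integrable_sq_mul_arcLengthExcess_add_two hu hM hu2 hw)
  have hg : MemLp g 2 μ := (memLp_two_iff_integrable_sq hg_meas).2 (hg_sq ▸ hw)
  have habs : (fun x => |u x * v x|) = fun x => f x * g x := by
    ext x
    rw [abs_mul, abs_eq_sqrt_arcLengthExcess_mul (v x)]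
    ring
  refine ⟨(hf.integrable_mul hg).mono' (hu.mul hv) (ae_of_all _ fun x => ?_), ?_⟩
  · exact (congrFun habs x).le
  calc (∫ x, |u x * v x| ∂μ) ^ 2 ≤ (∫ x, f x ^ 2 ∂μ) * ∫ x, g x ^ 2 ∂μ := by
        rw [habs]; exact sq_integral_mul_le_integral_sq_mul_integral_sq hf hg
    _ ≤ _ := by
      rw [hf_sq, hg_sq]
      gcongr ?_ * _
      · exact integral_nonneg fun x => arcLengthExcess_nonneg (v x)
      calc ∫ x, u x ^ 2 * (arcLengthExcess (v x) + 2) ∂μ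
          ≤ ∫ x, (M ^ 2 * arcLengthExcess (v x) + 2 * u x ^ 2) ∂μ :=
            integral_mono (integrable_sq_mul_arcLengthExcess_add_two hu hM hu2 hw)
              ((hw.const_mul _).add (hu2.const_mul 2))
              fun x => sq_mul_arcLengthExcess_add_two_le (hM x) (v x)
        _ = _ := by
          rw [integral_add (hw.const_mul _) (hu2.const_mul 2), integral_const_mul,
            integral_const_mul]
          ring

end Energy

theorem two_mul_le_add_sqrt_of_sq_le_mul_add {x b c : ℝ} (h : x ^ 2 ≤ b * x + c) :
    2 * x ≤ b + √(b ^ 2 + 4 * c) := by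
  have : |2 * x - b| ≤ √(b ^ 2 + 4 * c) := Real.abs_le_sqrt (by nlinarith)
  linarith [le_abs_self (2 * x - b)]

theorem le_inv_sqrt_two_mul_sqrt_of_pow_four_le {M a b : ℝ}
    (h : M ^ 4 ≤ a + b ^ 2 * M ^ 2) :
    M ≤ 1 / √2 * √(b ^ 2 + √(4 * a + b ^ 4)) := by
  have h2 := two_mul_le_add_sqrt_of_sq_le_mul_add (x := M ^ 2) (b := b ^ 2) (c := a) (by linarith)
  rw [one_div, ← Real.sqrt_inv, ← Real.sqrt_mul (by positivity)]
  refine Real.le_sqrt_of_sq_le ?_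
  have : (b ^ 2) ^ 2 + 4 * a = 4 * a + b ^ 4 := by ring
  rw [this] at h2
  linarith


/-- If `u ∈ H¹(ℝ)` with `E₀ = ∫ u²` and `E₁ = ∫ (√(1+u_x²)-1)`, and `M` is the
supremum of `|u|`, then `M⁴ ≤ 2E₀E₁ + E₁²M²` and consequently `M ≤ F₁` with
`F₁ = (1/√2)(E₁² + (8E₀E₁ + E₁⁴)^{1/2})^{1/2}`. -/
theorem Linfty_bound_by_E0_E1
    (u : ℝ → ℝ) (hu : ContDiff ℝ 1 u)
    (hu2 : Integrable (fun x => (u x)^2))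
    (hE1int : Integrable (fun x => Real.sqrt (1 + (deriv u x)^2) - 1))
    (hlim_top : Filter.Tendsto u Filter.atTop (nhds 0))
    (hlim_bot : Filter.Tendsto u Filter.atBot (nhds 0))
    (E0 E1 M : ℝ)
    (hE0 : E0 = ∫ x : ℝ, (u x)^2)
    (hE1 : E1 = ∫ x : ℝ, (Real.sqrt (1 + (deriv u x)^2) - 1))
    (hM : IsLUB (Set.range fun x => |u x|) M) :
    M^4 ≤ 2 * E0 * E1 + E1^2 * M^2 ∧
    M ≤ (1 / Real.sqrt 2) *
      Real.sqrt (E1^2 + Real.sqrt (8 * E0 * E1 + E1^4)) := by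
  have hbound (x : ℝ) : |u x| ≤ M := hM.1 ⟨x, rfl⟩
  have hM0 : 0 ≤ M := (abs_nonneg _).trans (hbound 0)
  change E1 = ∫ x, arcLengthExcess (deriv u x) at hE1
  obtain ⟨huu', henergy⟩ := sq_integral_abs_mul_le hu.continuous.aestronglyMeasurable
    (hu.continuous_deriv le_rfl).aestronglyMeasurable hbound hu2 hE1int
  rw [← hE0, ← hE1] at henergy
  set I := ∫ x, |u x * deriv u x|
  have hMI : M ^ 2 ≤ I := by
    refine (Real.le_sqrt hM0 (integral_nonneg fun x => abs_nonneg _)).1 (hM.2 ?_)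
    rintro _ ⟨x, rfl⟩
    refine Real.le_sqrt_of_sq_le ?_
    rw [sq_abs]
    exact sq_le_integral_abs_mul_deriv (hu.differentiable one_ne_zero) huu' hlim_bot hlim_top x
  have hquartic : M ^ 4 ≤ 2 * E0 * E1 + E1 ^ 2 * M ^ 2 := by
    calc M ^ 4 = (M ^ 2) ^ 2 := by ring
      _ ≤ I ^ 2 := pow_le_pow_left₀ (sq_nonneg M) hMI 2
      _ ≤ (2 * E0 + M ^ 2 * E1) * E1 := henergy
      _ = 2 * E0 * E1 + E1 ^ 2 * M ^ 2 := by ring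
  refine ⟨hquartic, ?_⟩
  have h := le_inv_sqrt_two_mul_sqrt_of_pow_four_le hquartic
  rwa [show 4 * (2 * E0 * E1) = 8 * E0 * E1 by ring] at h
end

section
/- Let u be a smooth solution of u_t = (1/2)u^2 u_x + ∂_x^{-1}u on 𝕊. Then (√(1+u_x^2))_t = ((1/2)u^2 √(1+u_x^2))_x pointwise, and consequently E_1 = ∫_𝕊 √(1+u_x^2) dx is constant in time. -/
open Real Function intervalIntegral MeasureTheory

/-- For a smooth solution of `u_t = (1/2)u²u_x + ∂_x⁻¹u` on the unit circle,
the pointwise identity `(√(1+u_x²))_t = ((1/2)u²√(1+u_x²))_x` holds, and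
consequently `E₁ = ∫ √(1+u_x²)` is constant in time. -/
theorem E1_conservation_periodic
    (u G : ℝ → ℝ → ℝ)
    (hu : ContDiff ℝ (⊤ : ℕ∞) (Function.uncurry u))
    (hG : ContDiff ℝ (⊤ : ℕ∞) (Function.uncurry G))
    (hper : ∀ t : ℝ, Function.Periodic (fun x => u x t) 1)
    (hmean : ∀ t : ℝ, ∫ x in (0:ℝ)..1, u x t = 0)
    (hGx : ∀ x t : ℝ, HasDerivAt (fun x' => G x' t) (u x t) x)
    (heq : ∀ x t : ℝ, HasDerivAt (fun t' => u x t')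
      ((1/2) * (u x t)^2 * deriv (fun x' => u x' t) x + G x t) t) :
    (∀ x t : ℝ,
      deriv (fun t' => Real.sqrt (1 + (deriv (fun x' => u x' t') x)^2)) t
        = deriv (fun x' =>
            (1/2) * (u x' t)^2 * Real.sqrt (1 + (deriv (fun x'' => u x'' t) x')^2)) x) ∧
    (∀ t : ℝ, (∫ x in (0:ℝ)..1, Real.sqrt (1 + (deriv (fun x' => u x' t) x)^2))
        = ∫ x in (0:ℝ)..1, Real.sqrt (1 + (deriv (fun x' => u x' 0) x)^2)) := by
  classical
  have hud : Differentiable ℝ (Function.uncurry u) := hu.differentiable (by simp)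
  have hfd : ∀ p : ℝ × ℝ, HasFDerivAt (Function.uncurry u) (fderiv ℝ (Function.uncurry u) p) p :=
    fun p => (hud p).hasFDerivAt
  set v : ℝ → ℝ → ℝ := fun x t => fderiv ℝ (Function.uncurry u) (x, t) (1, 0) with hvdef
  -- x-derivative of u
  have hvx : ∀ x t : ℝ, HasDerivAt (fun x' => u x' t) (v x t) x := by
    intro x t
    have h1 : HasDerivAt (fun x' : ℝ => (x', t)) ((1:ℝ), (0:ℝ)) x :=
      (hasDerivAt_id x).prodMk (hasDerivAt_const x t)
    exact (hfd (x, t)).comp_hasDerivAt x h1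
  have hderiv_eq : ∀ x t : ℝ, deriv (fun x' => u x' t) x = v x t := fun x t => (hvx x t).deriv
  -- t-derivative of u
  have hut : ∀ x t : ℝ, HasDerivAt (fun t' => u x t')
      (fderiv ℝ (Function.uncurry u) (x, t) (0, 1)) t := by
    intro x t
    have h1 : HasDerivAt (fun t' : ℝ => (x, t')) ((0:ℝ), (1:ℝ)) t :=
      (hasDerivAt_const t x).prodMk (hasDerivAt_id t)
    exact (hfd (x, t)).comp_hasDerivAt t h1
  have hut_eq : ∀ x t : ℝ, fderiv ℝ (Function.uncurry u) (x, t) (0, 1)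
      = (1/2) * (u x t)^2 * v x t + G x t := by
    intro x t
    exact (hut x t).unique (hderiv_eq x t ▸ heq x t)
  -- second derivatives
  have hg : ContDiff ℝ (⊤ : ℕ∞) (fderiv ℝ (Function.uncurry u)) := hu.fderiv_right (by simp)
  have hgd : ∀ p : ℝ × ℝ, HasFDerivAt (fderiv ℝ (Function.uncurry u))
      (fderiv ℝ (fderiv ℝ (Function.uncurry u)) p) p :=
    fun p => ((hg.differentiable (by simp)) p).hasFDerivAt
  set B : ℝ × ℝ → (ℝ × ℝ) →L[ℝ] (ℝ × ℝ) →L[ℝ] ℝ :=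
    fderiv ℝ (fderiv ℝ (Function.uncurry u)) with hBdef
  have hsymm : ∀ (p : ℝ × ℝ) (i j : ℝ × ℝ), B p i j = B p j i :=
    fun p i j => second_derivative_symmetric hfd (hgd p) i j
  -- t-derivative of v
  have hvt : ∀ x t : ℝ, HasDerivAt (fun t' => v x t') (B (x, t) (0, 1) (1, 0)) t := by
    intro x t
    have h1 : HasDerivAt (fun t' : ℝ => (x, t')) ((0:ℝ), (1:ℝ)) t :=
      (hasDerivAt_const t x).prodMk (hasDerivAt_id t)
    have h2 := (hgd (x, t)).comp_hasDerivAt t h1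
    have h3 := h2.clm_apply (hasDerivAt_const t ((1:ℝ), (0:ℝ)))
    simpa using h3
  -- x-derivative of v
  have hvx' : ∀ x t : ℝ, HasDerivAt (fun x' => v x' t) (B (x, t) (1, 0) (1, 0)) x := by
    intro x t
    have h1 : HasDerivAt (fun x' : ℝ => (x', t)) ((1:ℝ), (0:ℝ)) x :=
      (hasDerivAt_id x).prodMk (hasDerivAt_const x t)
    have h2 := (hgd (x, t)).comp_hasDerivAt x h1
    have h3 := h2.clm_apply (hasDerivAt_const x ((1:ℝ), (0:ℝ)))
    simpa using h3
  -- x-derivative of u_t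
  have hutx : ∀ x t : ℝ, HasDerivAt (fun x' => fderiv ℝ (Function.uncurry u) (x', t) (0, 1))
      (B (x, t) (1, 0) (0, 1)) x := by
    intro x t
    have h1 : HasDerivAt (fun x' : ℝ => (x', t)) ((1:ℝ), (0:ℝ)) x :=
      (hasDerivAt_id x).prodMk (hasDerivAt_const x t)
    have h2 := (hgd (x, t)).comp_hasDerivAt x h1
    have h3 := h2.clm_apply (hasDerivAt_const x ((0:ℝ), (1:ℝ)))
    simpa using h3
  have hRHSx : ∀ x t : ℝ, HasDerivAt (fun x' => (1/2) * (u x' t)^2 * v x' t + G x' t)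
      (B (x, t) (1, 0) (0, 1)) x := by
    intro x t
    exact (hutx x t).congr_of_eventuallyEq
      (Filter.Eventually.of_forall fun y => (hut_eq y t).symm)
  have hcomp : ∀ x t : ℝ, HasDerivAt (fun x' => (1/2) * (u x' t)^2 * v x' t + G x' t)
      (((1/2) * ((2:ℕ) * u x t ^ 1 * v x t)) * v x t
        + ((1/2) * (u x t)^2) * B (x, t) (1, 0) (1, 0) + u x t) x := by
    intro x t
    exact ((((hvx x t).pow 2).const_mul ((1:ℝ)/2)).mul (hvx' x t)).add (hGx x t)
  have hBt_eq : ∀ x t : ℝ, B (x, t) (0, 1) (1, 0)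
      = u x t * (v x t)^2 + (1/2) * (u x t)^2 * B (x, t) (1, 0) (1, 0) + u x t := by
    intro x t
    rw [hsymm]
    rw [(hRHSx x t).unique (hcomp x t)]
    push_cast
    ring
  -- positivity
  have hpos : ∀ x t : ℝ, (0:ℝ) < 1 + (v x t)^2 := by intro x t; positivity
  have hsq : ∀ x t : ℝ, Real.sqrt (1 + (v x t)^2) ^ 2 = 1 + (v x t)^2 :=
    fun x t => Real.sq_sqrt (hpos x t).le
  have hsqrt_pos : ∀ x t : ℝ, 0 < Real.sqrt (1 + (v x t)^2) :=
    fun x t => Real.sqrt_pos.2 (hpos x t)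
  -- define P = ∂_t √(1+v²)
  set P : ℝ × ℝ → ℝ := fun p => v p.1 p.2 * B p (0, 1) (1, 0) / Real.sqrt (1 + (v p.1 p.2)^2)
    with hPdef
  -- time derivative of √(1+v²)
  have hFt : ∀ x t : ℝ, HasDerivAt (fun t' => Real.sqrt (1 + (v x t')^2)) (P (x, t)) t := by
    intro x t
    have hin : HasDerivAt (fun t' => 1 + (v x t')^2)
        ((0:ℝ) + (2:ℕ) * v x t ^ 1 * B (x, t) (0, 1) (1, 0)) t :=
      (hasDerivAt_const t (1:ℝ)).add ((hvt x t).pow 2)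
    have h := (Real.hasDerivAt_sqrt (hpos x t).ne').comp t hin
    refine h.congr_deriv ?_
    symm
    have h0 := (hsqrt_pos x t).ne'
    rw [hPdef]
    field_simp
    ring
  -- x-derivative of (1/2)u²√(1+v²)
  have hHx : ∀ x t : ℝ, HasDerivAt (fun x' => (1/2) * (u x' t)^2 * Real.sqrt (1 + (v x' t)^2))
      (P (x, t)) x := by
    intro x t
    have hin : HasDerivAt (fun x' => 1 + (v x' t)^2)
        ((0:ℝ) + (2:ℕ) * v x t ^ 1 * B (x, t) (1, 0) (1, 0)) x :=
      (hasDerivAt_const x (1:ℝ)).add ((hvx' x t).pow 2)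
    have hsq' := (Real.hasDerivAt_sqrt (hpos x t).ne').comp x hin
    have h := (((hvx x t).pow 2).const_mul ((1:ℝ)/2)).mul hsq'
    refine h.congr_deriv ?_
    symm
    have h0 := (hsqrt_pos x t).ne'
    rw [hPdef]
    simp only [Function.comp_apply, Pi.pow_apply]
    rw [hBt_eq]
    have hs := hsq x t
    field_simp
    linear_combination (-(4 * u x t * v x t)) * hs
  constructor
  · intro x t
    simp only [hderiv_eq]
    rw [(hFt x t).deriv, (hHx x t).deriv]
  · -- conservation
    -- continuity facts
    have hvc : Continuous fun p : ℝ × ℝ => v p.1 p.2 := by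
      have := (ContinuousLinearMap.apply ℝ ℝ ((1:ℝ), (0:ℝ))).continuous.comp hg.continuous
      simpa [hvdef, Function.comp_def] using this
    have hg2 : ContDiff ℝ (⊤ : ℕ∞) B := hg.fderiv_right (by simp)
    have hBc : Continuous fun p : ℝ × ℝ => B p (0, 1) (1, 0) := by
      have h1 : Continuous fun p : ℝ × ℝ => B p ((0:ℝ), (1:ℝ)) :=
        (ContinuousLinearMap.apply ℝ ((ℝ × ℝ) →L[ℝ] ℝ) ((0:ℝ), (1:ℝ))).continuous.comp
          hg2.continuous
      exact (ContinuousLinearMap.apply ℝ ℝ ((1:ℝ), (0:ℝ))).continuous.comp h1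
    have hsc : Continuous fun p : ℝ × ℝ => Real.sqrt (1 + (v p.1 p.2)^2) :=
      Real.continuous_sqrt.comp (continuous_const.add (hvc.pow 2))
    have hPc : Continuous P :=
      (hvc.mul hBc).div hsc fun p => (hsqrt_pos p.1 p.2).ne'
    -- periodicity of v
    have hvper : ∀ x t : ℝ, v (x + 1) t = v x t := by
      intro x t
      have h1 : HasDerivAt (fun x' : ℝ => u (x' + 1) t) (v (x + 1) t) x := by
        have := HasDerivAt.comp x (hvx (x + 1) t) ((hasDerivAt_id x).add_const 1)
        simpa [Function.comp_def] using this
      have h2 : HasDerivAt (fun x' : ℝ => u x' t) (v (x + 1) t) x :=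
        h1.congr_of_eventuallyEq (Filter.Eventually.of_forall fun y => (hper t y).symm)
      exact h2.unique (hvx x t)
    have hvper' : ∀ x t : ℝ, v (x + 1) t = v x t := hvper
    -- ∫ P(x,τ) dx = 0
    have hPint : ∀ τ : ℝ, (∫ x in (0:ℝ)..1, P (x, τ)) = 0 := by
      intro τ
      have hi : IntervalIntegrable (fun x => P (x, τ)) volume 0 1 :=
        (hPc.comp (continuous_id.prodMk continuous_const)).intervalIntegrable 0 1
      have := intervalIntegral.integral_eq_sub_of_hasDerivAt
        (f := fun x => (1/2) * (u x τ)^2 * Real.sqrt (1 + (v x τ)^2))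
        (fun x _ => hHx x τ) hi
      rw [this]
      have hu1 : u 1 τ = u 0 τ := by simpa using hper τ 0
      have hv1 : v 1 τ = v 0 τ := by simpa using hvper 0 τ
      simp only [hu1, hv1]
      ring
    -- derivative of the energy
    have hφ : ∀ τ : ℝ, HasDerivAt
        (fun t => ∫ x in (0:ℝ)..1, Real.sqrt (1 + (v x t)^2)) 0 τ := by
      intro τ
      -- bound on compact set
      obtain ⟨C, hC⟩ := ((isCompact_Icc (a := (0:ℝ)) (b := 1)).prod
        (isCompact_closedBall τ 1)).exists_bound_of_continuousOn hPc.continuousOn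
      have key := intervalIntegral.hasDerivAt_integral_of_dominated_loc_of_deriv_le
        (F := fun t x => Real.sqrt (1 + (v x t)^2)) (F' := fun t x => P (x, t))
        (x₀ := τ) (s := Metric.ball τ 1) (a := (0:ℝ)) (b := 1) (bound := fun _ => C) (μ := volume)
        (Metric.ball_mem_nhds τ one_pos)
        (Filter.Eventually.of_forall fun t =>
          ((hsc.comp (continuous_id.prodMk continuous_const)).aestronglyMeasurable))
        ((hsc.comp (continuous_id.prodMk continuous_const)).intervalIntegrable 0 1)
        ((hPc.comp (continuous_id.prodMk continuous_const)).aestronglyMeasurable)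
        (Filter.Eventually.of_forall fun x hx t ht => by
          have hx' : x ∈ Set.Icc (0:ℝ) 1 := by
            rw [Set.uIoc_of_le (by norm_num : (0:ℝ) ≤ 1)] at hx
            exact Set.mem_Icc_of_Ioc hx
          exact hC (x, t) ⟨hx', Metric.ball_subset_closedBall ht⟩)
        (intervalIntegrable_const)
        (Filter.Eventually.of_forall fun x _ t _ => hFt x t)
      have := key.2
      rwa [hPint τ] at this
    have hconst : ∀ t : ℝ, (∫ x in (0:ℝ)..1, Real.sqrt (1 + (v x t)^2))
        = ∫ x in (0:ℝ)..1, Real.sqrt (1 + (v x 0)^2) := by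
      intro t
      exact is_const_of_deriv_eq_zero (fun τ => (hφ τ).differentiableAt)
        (fun τ => (hφ τ).deriv) t 0
    intro t
    simp only [hderiv_eq]
    exact hconst t
end
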